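/- Let D ⊆ ℝ² be a bounded convex open set, let e be a nondegenerate closed line segment contained in the boundary of D, let θ ∈ (0,1], and let ρ : ℝ² → ℝ be a measurable weight with 0 ≤ ρ ≤ 1 on D and ∫_D ρ dx ≥ θ·|D|. Then there exists a constant C > 0 such that for every continuously differentiable function w : ℝ² → ℝ, ∫_e |w − e_ρ(w)| dH¹ ≤ C·∫_D |∇w| dx, where e_ρ(w) = (∫_D w·ρ dx)/(∫_D ρ dx) and H¹ is the one-dimensional Hausdorff measure. -/

import Mathlib

/-!
Fix `z ∈ D`. For `x ∈ e`, the fundamental theorem of calculus on the segment from `x` to `z`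
bounds `|v x|` by the mean of `|v|` over its first half plus `diam D` times the integral of
`|∇v|` over that half. As `x = p + s (q - p)` runs over `e`, the point at parameter `t` of this
segment is `p + t (z - p) + (1 - t) s (q - p)`; since `e` lies on a supporting line of `D`, the
vectors `z - p` and `q - p` are independent, so after the substitution `a = (1 - t) s`
(costing `(1 - t)⁻¹ ≤ 2`) the sweep is an affine isomorphism of `ℝ²` onto a region of
`closure D`. This gives the trace inequality `‖v‖_{L¹(e)} ≲ ‖v‖_{L¹(D)} + ‖∇v‖_{L¹(D)}`.

For `v = w - e_ρ(w)` the term `‖v‖_{L¹(D)}` is controlled by a Poincaré inequality: since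
`0 ≤ ρ ≤ 1`, `|w x - e_ρ(w)| ≤ (∫_D ρ)⁻¹ ∫_D |w x - w y| dy`, and `|w x - w y|` is at most
`diam D` times the integral of `|∇w|` over the segment from `x` to `y`. For fixed `t`, the
point `x + t (y - x)` is the image of `y` (if `t ≥ 1/2`) or of `x` (if `t ≤ 1/2`) under a
homothety of ratio at least `1/2` mapping `D` into itself, which costs a factor `2 ^ dim`.
-/

open MeasureTheory Set AffineMap Module
open scoped ENNReal

theorem ofReal_inv_le_two {t : ℝ} (ht : 1 / 2 ≤ t) : ENNReal.ofReal t⁻¹ ≤ 2 := by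
  have hinv : t⁻¹ ≤ 2 := by rw [inv_le_comm₀ (by linarith) two_pos]; linarith
  exact (ENNReal.ofReal_le_ofReal hinv).trans_eq (ENNReal.ofReal_ofNat 2)

section Segment

variable {E F : Type*} [NormedAddCommGroup E] [NormedSpace ℝ E]
  [NormedAddCommGroup F] [NormedSpace ℝ F] [CompleteSpace F] {v : E → F}

theorem enorm_sub_le_lintegral_fderiv_lineMap (hv : ContDiff ℝ 1 v) (x z : E) {t : ℝ}
    (ht : 0 ≤ t) :
    ‖v (lineMap x z t) - v x‖ₑ ≤
      ‖z - x‖ₑ * ∫⁻ σ in Icc (0 : ℝ) t, ‖fderiv ℝ v (lineMap x z σ)‖ₑ := by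
  have hderiv : ∀ σ, HasDerivAt (fun σ => v (lineMap x z σ))
      (fderiv ℝ v (lineMap x z σ) (z - x)) σ := fun σ =>
    (hv.differentiable one_ne_zero _).hasFDerivAt.comp_hasDerivAt σ hasDerivAt_lineMap
  have hcont : Continuous fun σ : ℝ => fderiv ℝ v (lineMap x z σ) (z - x) :=
    ((hv.continuous_fderiv one_ne_zero).comp lineMap_continuous).clm_apply continuous_const
  have hftc : v (lineMap x z t) - v x = ∫ σ in Ioc 0 t, fderiv ℝ v (lineMap x z σ) (z - x) := by
    rw [← intervalIntegral.integral_of_le ht,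
      intervalIntegral.integral_eq_sub_of_hasDerivAt (fun σ _ => hderiv σ)
        (hcont.intervalIntegrable 0 t), lineMap_apply_zero]
  calc ‖v (lineMap x z t) - v x‖ₑ
      ≤ ∫⁻ σ in Ioc 0 t, ‖fderiv ℝ v (lineMap x z σ) (z - x)‖ₑ :=
        hftc ▸ enorm_integral_le_lintegral_enorm _
    _ ≤ ∫⁻ σ in Icc 0 t, ‖fderiv ℝ v (lineMap x z σ)‖ₑ * ‖z - x‖ₑ :=
        (lintegral_mono fun σ => ContinuousLinearMap.le_opENorm _ _).trans
          (lintegral_mono_set Ioc_subset_Icc_self)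
    _ = ‖z - x‖ₑ * ∫⁻ σ in Icc 0 t, ‖fderiv ℝ v (lineMap x z σ)‖ₑ := by
        rw [lintegral_mul_const' _ _ enorm_ne_top, mul_comm]

theorem enorm_le_lintegral_lineMap (hv : ContDiff ℝ 1 v) (x z : E) :
    ‖v x‖ₑ ≤ 2 * (∫⁻ t in Icc (0 : ℝ) (1 / 2), ‖v (lineMap x z t)‖ₑ) +
      ‖z - x‖ₑ * ∫⁻ t in Icc (0 : ℝ) (1 / 2), ‖fderiv ℝ v (lineMap x z t)‖ₑ := by
  set B := ‖z - x‖ₑ * ∫⁻ t in Icc (0 : ℝ) (1 / 2), ‖fderiv ℝ v (lineMap x z t)‖ₑ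
  have hpoint : ∀ t ∈ Icc (0 : ℝ) (1 / 2), ‖v x‖ₑ ≤ ‖v (lineMap x z t)‖ₑ + B := fun t ht =>
    calc ‖v x‖ₑ ≤ ‖v (lineMap x z t)‖ₑ + ‖v (lineMap x z t) - v x‖ₑ := by
          simpa using enorm_sub_le (a := v (lineMap x z t)) (b := v (lineMap x z t) - v x)
      _ ≤ ‖v (lineMap x z t)‖ₑ + B := by
          gcongr
          exact (enorm_sub_le_lintegral_fderiv_lineMap hv x z ht.1).trans
            (mul_le_mul_right (lintegral_mono_set (Icc_subset_Icc_right ht.2)) _)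
  have hvol : volume (Icc (0 : ℝ) (1 / 2)) = 2⁻¹ := by
    rw [Real.volume_Icc, sub_zero, one_div, ENNReal.ofReal_inv_of_pos two_pos,
      ENNReal.ofReal_ofNat]
  have htwo : (2 : ℝ≥0∞) * 2⁻¹ = 1 := ENNReal.mul_inv_cancel two_ne_zero ENNReal.ofNat_ne_top
  calc ‖v x‖ₑ = 2 * ∫⁻ _ in Icc (0 : ℝ) (1 / 2), ‖v x‖ₑ := by
        rw [setLIntegral_const, hvol, mul_comm _ (2⁻¹ : ℝ≥0∞), ← mul_assoc, htwo, one_mul]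
    _ ≤ 2 * ∫⁻ t in Icc (0 : ℝ) (1 / 2), (‖v (lineMap x z t)‖ₑ + B) :=
        mul_le_mul_right (setLIntegral_mono' measurableSet_Icc hpoint) 2
    _ = 2 * (∫⁻ t in Icc (0 : ℝ) (1 / 2), ‖v (lineMap x z t)‖ₑ) + B := by
        rw [lintegral_add_right _ measurable_const, setLIntegral_const, hvol, mul_add,
          mul_comm B, ← mul_assoc, htwo, one_mul]

theorem hausdorffMeasure_restrict_segment [MeasurableSpace E] [BorelSpace E] (p q : E) :
    (μH[1] : Measure E).restrict (segment ℝ p q) =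
      nndist p q • (volume.restrict (Icc (0 : ℝ) 1)).map (lineMap p q) := by
  have hm : Measurable (lineMap p q : ℝ → E) := lineMap_continuous.measurable
  ext A hA
  rw [Measure.restrict_apply hA, Measure.smul_apply, Measure.map_apply hm hA,
    Measure.restrict_apply (hm hA), segment_eq_image_lineMap, ← image_preimage_inter,
    hausdorffMeasure_lineMap_image, hausdorffMeasure_real]

theorem lintegral_segment_hausdorffMeasure [MeasurableSpace E] [BorelSpace E] (p q : E)
    {G : E → ℝ≥0∞} (hG : Measurable G) :
    ∫⁻ x in segment ℝ p q, G x ∂μH[1] = edist p q * ∫⁻ s in Icc (0 : ℝ) 1, G (lineMap p q s) := by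
  rw [hausdorffMeasure_restrict_segment, lintegral_smul_measure,
    lintegral_map hG lineMap_continuous.measurable, edist_nndist]
  rfl

theorem lintegral_segment_enorm_le_lintegral_lineMap [MeasurableSpace E] [BorelSpace E]
    (hv : ContDiff ℝ 1 v) (p q z : E) {R : ℝ≥0∞}
    (hR : ∀ s ∈ Icc (0 : ℝ) 1, ‖z - lineMap p q s‖ₑ ≤ R) :
    ∫⁻ x in segment ℝ p q, ‖v x‖ₑ ∂μH[1] ≤
      edist p q * (2 * (∫⁻ s in Icc (0 : ℝ) 1, ∫⁻ t in Icc (0 : ℝ) (1 / 2),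
          ‖v (lineMap (lineMap p q s) z t)‖ₑ) +
        R * ∫⁻ s in Icc (0 : ℝ) 1, ∫⁻ t in Icc (0 : ℝ) (1 / 2),
          ‖fderiv ℝ v (lineMap (lineMap p q s) z t)‖ₑ) := by
  have hmeas : ∀ G : E → ℝ≥0∞, Continuous G →
      Measurable fun s : ℝ => ∫⁻ t in Icc (0 : ℝ) (1 / 2), G (lineMap (lineMap p q s) z t) :=
    fun G hG => (hG.comp ((continuous_const.lineMap continuous_const continuous_fst).lineMap
      continuous_const continuous_snd)).measurable.lintegral_prod_right'
  have hV := hv.continuous.enorm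
  have hG := (hv.continuous_fderiv one_ne_zero).enorm
  rw [lintegral_segment_hausdorffMeasure p q hV.measurable, ← lintegral_const_mul _ (hmeas _ hV),
    ← lintegral_const_mul _ (hmeas _ hG), ← lintegral_add_left ((hmeas _ hV).const_mul _)]
  refine mul_le_mul_right (setLIntegral_mono' measurableSet_Icc fun s hs => ?_) _
  exact (enorm_le_lintegral_lineMap hv _ z).trans (by gcongr; exact hR s hs)

theorem linearIndependent_sub_of_segment_subset_frontier {D : Set E} (hD : Convex ℝ D)
    (hDo : IsOpen D) {p q z : E} (hpq : p ≠ q) (hseg : segment ℝ p q ⊆ frontier D)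
    (hz : z ∈ D) :
    LinearIndependent ℝ ![z - p, q - p] := by
  -- A functional separating `D` from the midpoint of the segment is constant on the segment.
  have hm : midpoint ℝ p q ∉ D := fun hmD =>
    (hDo.frontier_eq ▸ hseg (midpoint_mem_segment p q)).2 hmD
  obtain ⟨f, hf⟩ := geometric_hahn_banach_open_point hD hDo hm
  have hcl : ∀ x ∈ closure D, f x ≤ f (midpoint ℝ p q) :=
    closure_minimal (fun a ha => (hf a ha).le) (isClosed_le f.continuous continuous_const)
  have hp := hcl p (frontier_subset_closure (hseg (left_mem_segment ℝ p q)))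
  have hq := hcl q (frontier_subset_closure (hseg (right_mem_segment ℝ p q)))
  have hsum : f p + f q = 2 * f (midpoint ℝ p q) := by
    rw [← map_add, ← midpoint_add_self ℝ p q, map_add, two_mul]
  have hfqp : f (q - p) = 0 := by rw [map_sub]; linarith
  have hfzp : f (z - p) < 0 := by rw [map_sub]; linarith [hf z hz]
  refine LinearIndependent.pair_iff.2 fun t a h => ?_
  have ht : t = 0 := by
    have := congrArg f h
    rw [map_add, map_smul, map_smul, hfqp, smul_zero, add_zero, map_zero, smul_eq_mul] at this
    exact (mul_eq_zero.1 this).resolve_right hfzp.ne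
  subst ht
  rw [zero_smul, zero_add, smul_eq_zero, sub_eq_zero] at h
  exact ⟨rfl, h.resolve_right (Ne.symm hpq)⟩

end Segment

theorem enorm_sub_weightedMean_le {α : Type*} [MeasurableSpace α] {μ : Measure α} {s : Set α}
    (hs : MeasurableSet s) {ρ w : α → ℝ} (hρ0 : ∀ y ∈ s, 0 ≤ ρ y) (hρ1 : ∀ y ∈ s, ρ y ≤ 1)
    (hρ : 0 < ∫ y in s, ρ y ∂μ) (hw : IntegrableOn w s μ) (x : α) :
    ‖w x - (∫ y in s, w y * ρ y ∂μ) / ∫ y in s, ρ y ∂μ‖ₑ ≤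
      ENNReal.ofReal (∫ y in s, ρ y ∂μ)⁻¹ * ∫⁻ y in s, ‖w x - w y‖ₑ ∂μ := by
  set I := ∫ y in s, ρ y ∂μ
  have hρint : IntegrableOn ρ s μ := Integrable.of_integral_ne_zero hρ.ne'
  have hwρ : IntegrableOn (fun y => w y * ρ y) s μ :=
    hw.mul_bdd hρint.aestronglyMeasurable ((ae_restrict_iff' hs).2 (.of_forall fun y hy => by
      rw [Real.norm_of_nonneg (hρ0 y hy)]; exact hρ1 y hy))
  have hmean : w x - (∫ y in s, w y * ρ y ∂μ) / I = I⁻¹ * ∫ y in s, (w x - w y) * ρ y ∂μ := by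
    simp_rw [sub_mul]
    rw [integral_sub (hρint.const_mul (w x)) hwρ, integral_const_mul]
    field_simp
    rfl
  calc ‖w x - (∫ y in s, w y * ρ y ∂μ) / I‖ₑ
      = ENNReal.ofReal I⁻¹ * ‖∫ y in s, (w x - w y) * ρ y ∂μ‖ₑ := by
        rw [hmean, enorm_mul, Real.enorm_of_nonneg (inv_nonneg.2 hρ.le)]
    _ ≤ ENNReal.ofReal I⁻¹ * ∫⁻ y in s, ‖w x - w y‖ₑ ∂μ := by
        gcongr
        refine (enorm_integral_le_lintegral_enorm _).trans (setLIntegral_mono' hs fun y hy => ?_)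
        rw [enorm_mul, Real.enorm_of_nonneg (hρ0 y hy)]
        exact mul_le_of_le_one_right' (ENNReal.ofReal_le_one.2 (hρ1 y hy))

section Haar

variable {E : Type*} [NormedAddCommGroup E] [NormedSpace ℝ E] [FiniteDimensional ℝ E]
  [MeasurableSpace E] [BorelSpace E] (μ : Measure E) [μ.IsAddHaarMeasure]
  {F : Type*} [NormedAddCommGroup F] [NormedSpace ℝ F] [CompleteSpace F]

theorem lintegral_comp_homothety (x : E) {t : ℝ} (ht : t ≠ 0) (G : E → ℝ≥0∞) :
    ∫⁻ y, G (homothety x t y) ∂μ = ENNReal.ofReal |(t ^ finrank ℝ E)⁻¹| * ∫⁻ y, G y ∂μ := by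
  have hsmul : ∫⁻ y, G (t • y + x) ∂μ = ∫⁻ y, G (y + x) ∂(μ.map (t • ·)) :=
    (lintegral_map_equiv (fun y => G (y + x))
      (Homeomorph.smulOfNeZero t ht).toMeasurableEquiv).symm
  simp only [homothety_apply, vsub_eq_sub, vadd_eq_add]
  rw [lintegral_sub_right_eq_self (fun y => G (t • y + x)) x, hsmul, Measure.map_addHaar_smul μ ht,
    lintegral_smul_measure, lintegral_add_right_eq_self, smul_eq_mul]

theorem lintegral_comp_mul_le_two {r : ℝ} (hr : 1 / 2 ≤ r) (g : ℝ → ℝ≥0∞) :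
    ∫⁻ s, g (r * s) ≤ 2 * ∫⁻ a, g a := by
  have hr0 : 0 < r := by linarith
  have h := lintegral_comp_homothety volume (0 : ℝ) hr0.ne' g
  simp only [homothety_apply, vsub_eq_sub, sub_zero, vadd_eq_add, add_zero, smul_eq_mul,
    finrank_self, pow_one] at h
  rw [h, abs_of_pos (inv_pos.2 hr0)]
  gcongr
  exact ofReal_inv_le_two hr

theorem setLIntegral_comp_homothety_le {s : Set E} (hs : MeasurableSet s) {x : E} {t : ℝ}
    (ht : 0 < t) (hst : MapsTo (homothety x t) s s) (G : E → ℝ≥0∞) :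
    ∫⁻ y in s, G (homothety x t y) ∂μ ≤
      ENNReal.ofReal (t ^ finrank ℝ E)⁻¹ * ∫⁻ y in s, G y ∂μ := by
  calc ∫⁻ y in s, G (homothety x t y) ∂μ
      ≤ ∫⁻ y, s.indicator G (homothety x t y) ∂μ := by
        rw [← lintegral_indicator hs]
        refine lintegral_mono fun y => ?_
        by_cases hy : y ∈ s
        · simp [hy, hst hy]
        · simp [hy]
    _ = _ := by
        rw [lintegral_comp_homothety μ x ht.ne', abs_of_pos (by positivity),
          lintegral_indicator hs]

variable {μ}

theorem setLIntegral_comp_lineMap_le {D : Set E} (hD : Convex ℝ D) (hDm : MeasurableSet D)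
    {x : E} (hx : x ∈ D) {t : ℝ} (ht : t ∈ Icc (1 / 2 : ℝ) 1) (G : E → ℝ≥0∞) :
    ∫⁻ y in D, G (lineMap x y t) ∂μ ≤ 2 ^ finrank ℝ E * ∫⁻ y in D, G y ∂μ := by
  have ht0 : 0 < t := by linarith [ht.1]
  simp_rw [← homothety_eq_lineMap]
  refine (setLIntegral_comp_homothety_le μ hDm ht0
    (fun y hy => homothety_eq_lineMap x t y ▸ hD.lineMap_mem hx hy ⟨ht0.le, ht.2⟩) G).trans ?_
  rw [← inv_pow, ENNReal.ofReal_pow (by positivity)]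
  gcongr
  exact ofReal_inv_le_two ht.1

theorem lintegral_lintegral_comp_lineMap_le {D : Set E} (hD : Convex ℝ D) (hDm : MeasurableSet D)
    {G : E → ℝ≥0∞} (hG : Measurable G) {t : ℝ} (ht : t ∈ Icc (0 : ℝ) 1) :
    ∫⁻ x in D, ∫⁻ y in D, G (lineMap x y t) ∂μ ∂μ ≤
      2 ^ finrank ℝ E * μ D * ∫⁻ x in D, G x ∂μ := by
  have hbound : ∀ s ∈ Icc (1 / 2 : ℝ) 1, ∫⁻ x in D, ∫⁻ y in D, G (lineMap x y s) ∂μ ∂μ ≤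
      2 ^ finrank ℝ E * μ D * ∫⁻ x in D, G x ∂μ := fun s hs =>
    calc ∫⁻ x in D, ∫⁻ y in D, G (lineMap x y s) ∂μ ∂μ
        ≤ ∫⁻ _ in D, 2 ^ finrank ℝ E * ∫⁻ y in D, G y ∂μ ∂μ :=
          setLIntegral_mono' hDm fun x hx => setLIntegral_comp_lineMap_le hD hDm hx hs G
      _ = _ := by rw [setLIntegral_const]; ring
  rcases le_total (1 / 2) t with h | h
  · exact hbound t ⟨h, ht.2⟩
  · rw [lintegral_lintegral_swap (f := fun x y => G (lineMap x y t))
      (hG.comp (continuous_fst.lineMap continuous_snd continuous_const).measurable).aemeasurable]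
    simp_rw [← lineMap_apply_one_sub _ _ t]
    exact hbound (1 - t) ⟨by linarith, by linarith [ht.1]⟩

theorem lintegral_lintegral_enorm_sub_le {D : Set E} (hD : Convex ℝ D) (hDm : MeasurableSet D)
    {w : E → F} (hw : ContDiff ℝ 1 w) :
    ∫⁻ x in D, ∫⁻ y in D, ‖w x - w y‖ₑ ∂μ ∂μ ≤
      Metric.ediam D * (2 ^ finrank ℝ E * μ D) * ∫⁻ x in D, ‖fderiv ℝ w x‖ₑ ∂μ := by
  set G : E → ℝ≥0∞ := fun x => ‖fderiv ℝ w x‖ₑ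
  have hG : Continuous G := (hw.continuous_fderiv one_ne_zero).enorm
  have hGline : Measurable fun p : (E × E) × ℝ => G (lineMap p.1.1 p.1.2 p.2) :=
    (hG.comp (continuous_fst.fst.lineMap continuous_fst.snd continuous_snd)).measurable
  have hH : Measurable fun p : E × E => ∫⁻ σ in Icc (0 : ℝ) 1, G (lineMap p.1 p.2 σ) :=
    hGline.lintegral_prod_right'
  have hpoint : ∀ x ∈ D, ∀ y ∈ D,
      ‖w x - w y‖ₑ ≤ Metric.ediam D * ∫⁻ σ in Icc (0 : ℝ) 1, G (lineMap x y σ) := by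
    intro x hx y hy
    calc ‖w x - w y‖ₑ ≤ ‖y - x‖ₑ * ∫⁻ σ in Icc (0 : ℝ) 1, G (lineMap x y σ) := by
          simpa [enorm_sub_rev (w x)] using
            enorm_sub_le_lintegral_fderiv_lineMap hw x y zero_le_one
      _ ≤ _ := by
          gcongr
          rw [← edist_eq_enorm_sub]
          exact Metric.edist_le_ediam_of_mem hy hx
  calc ∫⁻ x in D, ∫⁻ y in D, ‖w x - w y‖ₑ ∂μ ∂μ
      ≤ ∫⁻ x in D, ∫⁻ y in D,
          Metric.ediam D * (∫⁻ σ in Icc (0 : ℝ) 1, G (lineMap x y σ)) ∂μ ∂μ :=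
        setLIntegral_mono' hDm fun x hx => setLIntegral_mono' hDm (hpoint x hx)
    _ = Metric.ediam D * ∫⁻ p : E × E,
          (∫⁻ σ in Icc (0 : ℝ) 1, G (lineMap p.1 p.2 σ)) ∂(μ.restrict D).prod (μ.restrict D) := by
        rw [← lintegral_const_mul _ hH, lintegral_prod _ (hH.const_mul _).aemeasurable]
    _ = Metric.ediam D *
          ∫⁻ σ in Icc (0 : ℝ) 1, ∫⁻ x in D, ∫⁻ y in D, G (lineMap x y σ) ∂μ ∂μ := by
        rw [lintegral_lintegral_swap hGline.aemeasurable]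
        congr 1
        refine lintegral_congr fun σ => lintegral_prod _ ?_
        exact (hG.comp (continuous_fst.lineMap continuous_snd continuous_const)).aemeasurable
    _ ≤ Metric.ediam D * ∫⁻ _ in Icc (0 : ℝ) 1, 2 ^ finrank ℝ E * μ D * ∫⁻ x in D, G x ∂μ :=
        mul_le_mul_right (setLIntegral_mono' measurableSet_Icc fun σ hσ =>
          lintegral_lintegral_comp_lineMap_le hD hDm hG.measurable hσ) _
    _ = Metric.ediam D * (2 ^ finrank ℝ E * μ D) * ∫⁻ x in D, G x ∂μ := by
        rw [setLIntegral_const, Real.volume_Icc, sub_zero, ENNReal.ofReal_one, mul_one]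
        ring

theorem setLIntegral_enorm_sub_weightedMean_le {D : Set E} (hD : Convex ℝ D)
    (hDm : MeasurableSet D) {ρ w : E → ℝ} (hρ0 : ∀ y ∈ D, 0 ≤ ρ y) (hρ1 : ∀ y ∈ D, ρ y ≤ 1)
    (hρ : 0 < ∫ y in D, ρ y ∂μ) (hw : ContDiff ℝ 1 w) (hwi : IntegrableOn w D μ) :
    ∫⁻ x in D, ‖w x - (∫ y in D, w y * ρ y ∂μ) / ∫ y in D, ρ y ∂μ‖ₑ ∂μ ≤
      ENNReal.ofReal (∫ y in D, ρ y ∂μ)⁻¹ * (Metric.ediam D * (2 ^ finrank ℝ E * μ D)) *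
        ∫⁻ x in D, ‖fderiv ℝ w x‖ₑ ∂μ :=
  calc ∫⁻ x in D, ‖w x - (∫ y in D, w y * ρ y ∂μ) / ∫ y in D, ρ y ∂μ‖ₑ ∂μ
      ≤ ∫⁻ x in D, ENNReal.ofReal (∫ y in D, ρ y ∂μ)⁻¹ * ∫⁻ y in D, ‖w x - w y‖ₑ ∂μ ∂μ :=
        lintegral_mono fun x => enorm_sub_weightedMean_le hDm hρ0 hρ1 hρ hwi x
    _ = ENNReal.ofReal (∫ y in D, ρ y ∂μ)⁻¹ * ∫⁻ x in D, ∫⁻ y in D, ‖w x - w y‖ₑ ∂μ ∂μ :=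
        lintegral_const_mul' _ _ ENNReal.ofReal_ne_top
    _ ≤ _ := by
        rw [mul_assoc]
        exact mul_le_mul_right (lintegral_lintegral_enorm_sub_le hD hDm hw) _

variable (μ)

theorem exists_lintegral_lineMap_lineMap_le (hE : finrank ℝ E = 2) {p q z : E}
    (hind : LinearIndependent ℝ ![z - p, q - p]) :
    ∃ C : ℝ≥0∞, C ≠ ∞ ∧ ∀ G : E → ℝ≥0∞, Measurable G →
      ∫⁻ s in Icc (0 : ℝ) 1, ∫⁻ t in Icc (0 : ℝ) (1 / 2), G (lineMap (lineMap p q s) z t) ≤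
        C * ∫⁻ x, G x ∂μ := by
  let L : ℝ × ℝ →ₗ[ℝ] E :=
    (LinearMap.fst ℝ ℝ ℝ).smulRight (z - p) + (LinearMap.snd ℝ ℝ ℝ).smulRight (q - p)
  have hL : Function.Injective L := by
    refine (injective_iff_map_eq_zero L).2 fun x hx => ?_
    obtain ⟨h1, h2⟩ := LinearIndependent.pair_iff.1 hind x.1 x.2 hx
    exact Prod.ext h1 h2
  let Le : (ℝ × ℝ) ≃ₗ[ℝ] E := L.linearEquivOfInjective hL (by simp [hE])
  have hLe : Measurable (Le : ℝ × ℝ → E) := Le.toContinuousLinearEquiv.continuous.measurable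
  set c := Measure.addHaarScalarFactor ((volume : Measure (ℝ × ℝ)).map Le) μ
  have hmap : (volume : Measure (ℝ × ℝ)).map Le = c • μ := Measure.isAddLeftInvariant_eq_smul _ _
  refine ⟨2 * c, ENNReal.mul_ne_top ENNReal.ofNat_ne_top ENNReal.coe_ne_top, fun G hG => ?_⟩
  -- After the substitution `a = (1 - t) s` the sweep is the affine isomorphism `p + Le`.
  have hline : ∀ s t : ℝ, lineMap (lineMap p q s) z t = p + Le (t, (1 - t) * s) := by
    intro s t
    simp only [lineMap_apply_module', Le, LinearMap.linearEquivOfInjective_apply, L,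
      LinearMap.add_apply, LinearMap.smulRight_apply, LinearMap.fst_apply, LinearMap.snd_apply]
    module
  have hGL : Measurable fun x : ℝ × ℝ => G (p + Le x) := hG.comp (measurable_const.add hLe)
  calc ∫⁻ s in Icc (0 : ℝ) 1, ∫⁻ t in Icc (0 : ℝ) (1 / 2), G (lineMap (lineMap p q s) z t)
      = ∫⁻ t in Icc (0 : ℝ) (1 / 2), ∫⁻ s in Icc (0 : ℝ) 1, G (p + Le (t, (1 - t) * s)) := by
        simp_rw [hline]
        exact lintegral_lintegral_swap (hGL.comp (by fun_prop)).aemeasurable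
    _ ≤ ∫⁻ t, 2 * ∫⁻ a, G (p + Le (t, a)) :=
        (setLIntegral_mono' measurableSet_Icc fun t ht => (setLIntegral_le_lintegral _ _).trans
          (lintegral_comp_mul_le_two (by linarith [ht.2]) _)).trans
        (setLIntegral_le_lintegral _ _)
    _ = 2 * ∫⁻ x, G (p + x) ∂((volume : Measure (ℝ × ℝ)).map Le) := by
        rw [lintegral_map (f := fun x => G (p + x)) (hG.comp (measurable_const_add p)) hLe,
          Measure.volume_eq_prod, lintegral_prod _ hGL.aemeasurable,
          lintegral_const_mul _ hGL.lintegral_prod_right']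
    _ = 2 * c * ∫⁻ x, G x ∂μ := by
        rw [hmap, lintegral_smul_measure, lintegral_add_left_eq_self, ENNReal.smul_def,
          smul_eq_mul, mul_assoc]

theorem Convex.exists_lintegral_lineMap_lineMap_le (hE : finrank ℝ E = 2) {D : Set E}
    (hD : Convex ℝ D) {p q z : E} (hp : p ∈ closure D) (hq : q ∈ closure D) (hz : z ∈ D)
    (hind : LinearIndependent ℝ ![z - p, q - p]) :
    ∃ C : ℝ≥0∞, C ≠ ∞ ∧ ∀ G : E → ℝ≥0∞, Measurable G →
      ∫⁻ s in Icc (0 : ℝ) 1, ∫⁻ t in Icc (0 : ℝ) (1 / 2), G (lineMap (lineMap p q s) z t) ≤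
        C * ∫⁻ x in D, G x ∂μ := by
  obtain ⟨C, hC, hcone⟩ := _root_.exists_lintegral_lineMap_lineMap_le μ hE hind
  refine ⟨C, hC, fun G hG => ?_⟩
  have hmem : ∀ s ∈ Icc (0 : ℝ) 1, ∀ t ∈ Icc (0 : ℝ) (1 / 2),
      lineMap (lineMap p q s) z t ∈ closure D := fun s hs t ht =>
    hD.closure.lineMap_mem (hD.closure.lineMap_mem hp hq hs) (subset_closure hz)
      ⟨ht.1, ht.2.trans (by norm_num)⟩
  calc ∫⁻ s in Icc (0 : ℝ) 1, ∫⁻ t in Icc (0 : ℝ) (1 / 2), G (lineMap (lineMap p q s) z t)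
      = ∫⁻ s in Icc (0 : ℝ) 1, ∫⁻ t in Icc (0 : ℝ) (1 / 2),
          (closure D).indicator G (lineMap (lineMap p q s) z t) :=
        setLIntegral_congr_fun measurableSet_Icc fun s hs =>
          setLIntegral_congr_fun measurableSet_Icc fun t ht =>
            (indicator_of_mem (hmem s hs t ht) G).symm
    _ ≤ C * ∫⁻ x in closure D, G x ∂μ := by
        rw [← lintegral_indicator measurableSet_closure]
        exact hcone _ (hG.indicator measurableSet_closure)
    _ = C * ∫⁻ x in D, G x ∂μ := by
        rw [setLIntegral_congr (closure_ae_eq_of_null_frontier (hD.addHaar_frontier μ))]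

theorem exists_lintegral_segment_enorm_le (hE : finrank ℝ E = 2) {D : Set E} (hD : Convex ℝ D)
    (hDo : IsOpen D) (hDb : Bornology.IsBounded D) {p q : E} (hpq : p ≠ q)
    (hseg : segment ℝ p q ⊆ frontier D) :
    ∃ C : ℝ≥0∞, C ≠ ∞ ∧ ∀ v : E → F, ContDiff ℝ 1 v →
      ∫⁻ x in segment ℝ p q, ‖v x‖ₑ ∂μH[1] ≤
        C * (∫⁻ x in D, ‖v x‖ₑ ∂μ + ∫⁻ x in D, ‖fderiv ℝ v x‖ₑ ∂μ) := by
  have hcl : segment ℝ p q ⊆ closure D := hseg.trans frontier_subset_closure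
  obtain ⟨z, hz⟩ : D.Nonempty := closure_nonempty_iff.1 ⟨p, hcl (left_mem_segment ℝ p q)⟩
  obtain ⟨C, hC, hcone⟩ := hD.exists_lintegral_lineMap_lineMap_le μ hE
    (hcl (left_mem_segment ℝ p q)) (hcl (right_mem_segment ℝ p q)) hz
    (linearIndependent_sub_of_segment_subset_frontier hD hDo hpq hseg hz)
  have hR : ∀ s ∈ Icc (0 : ℝ) 1, ‖z - lineMap p q s‖ₑ ≤ Metric.ediam D := fun s hs => by
    rw [← edist_eq_enorm_sub, ← Metric.ediam_closure]
    exact Metric.edist_le_ediam_of_mem (subset_closure hz) (hcl (lineMap_mem_segment ℝ p q hs))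
  refine ⟨edist p q * C * (2 + Metric.ediam D), ENNReal.mul_ne_top
    (ENNReal.mul_ne_top (edist_ne_top p q) hC)
    (ENNReal.add_ne_top.2 ⟨ENNReal.ofNat_ne_top, hDb.ediam_ne_top⟩), fun v hv => ?_⟩
  set V := ∫⁻ x in D, ‖v x‖ₑ ∂μ
  set G := ∫⁻ x in D, ‖fderiv ℝ v x‖ₑ ∂μ
  calc ∫⁻ x in segment ℝ p q, ‖v x‖ₑ ∂μH[1]
      ≤ edist p q * (2 * (C * V) + Metric.ediam D * (C * G)) := by
        refine (lintegral_segment_enorm_le_lintegral_lineMap hv p q z hR).trans ?_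
        gcongr
        · exact hcone _ hv.continuous.enorm.measurable
        · exact hcone _ (hv.continuous_fderiv one_ne_zero).enorm.measurable
    _ = edist p q * C * (2 * V + Metric.ediam D * G) := by ring
    _ ≤ edist p q * C * ((2 + Metric.ediam D) * (V + G)) := by
        gcongr
        rw [add_mul, mul_add, mul_add]
        exact add_le_add le_self_add le_add_self
    _ = _ := by ring

theorem exists_lintegral_segment_enorm_sub_weightedMean_le (hE : finrank ℝ E = 2) {D : Set E}
    (hD : Convex ℝ D) (hDo : IsOpen D) (hDb : Bornology.IsBounded D) {p q : E} (hpq : p ≠ q)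
    (hseg : segment ℝ p q ⊆ frontier D) {ρ : E → ℝ} (hρ0 : ∀ y ∈ D, 0 ≤ ρ y)
    (hρ1 : ∀ y ∈ D, ρ y ≤ 1) (hρ : 0 < ∫ y in D, ρ y ∂μ) :
    ∃ K : ℝ≥0∞, K ≠ ∞ ∧ ∀ w : E → ℝ, ContDiff ℝ 1 w →
      ∫⁻ x in segment ℝ p q, ‖w x - (∫ y in D, w y * ρ y ∂μ) / ∫ y in D, ρ y ∂μ‖ₑ ∂μH[1] ≤
        K * ∫⁻ x in D, ‖fderiv ℝ w x‖ₑ ∂μ := by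
  obtain ⟨C, hC, htrace⟩ := exists_lintegral_segment_enorm_le (F := ℝ) μ hE hD hDo hDb hpq hseg
  set P := ENNReal.ofReal (∫ y in D, ρ y ∂μ)⁻¹ * (Metric.ediam D * (2 ^ finrank ℝ E * μ D))
  have hP : P ≠ ∞ := ENNReal.mul_ne_top ENNReal.ofReal_ne_top (ENNReal.mul_ne_top
    hDb.ediam_ne_top (ENNReal.mul_ne_top (ENNReal.pow_ne_top ENNReal.ofNat_ne_top)
      hDb.measure_lt_top.ne))
  refine ⟨C * (P + 1), ENNReal.mul_ne_top hC (ENNReal.add_ne_top.2 ⟨hP, ENNReal.one_ne_top⟩),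
    fun w hw => ?_⟩
  set c := (∫ y in D, w y * ρ y ∂μ) / ∫ y in D, ρ y ∂μ
  have hwi : IntegrableOn w D μ :=
    (hw.continuous.continuousOn.integrableOn_compact hDb.isCompact_closure).mono_set subset_closure
  calc ∫⁻ x in segment ℝ p q, ‖w x - c‖ₑ ∂μH[1]
      ≤ C * ((∫⁻ x in D, ‖w x - c‖ₑ ∂μ) + ∫⁻ x in D, ‖fderiv ℝ (fun y => w y - c) x‖ₑ ∂μ) :=
        htrace _ (hw.sub contDiff_const)
    _ ≤ C * (P * (∫⁻ x in D, ‖fderiv ℝ w x‖ₑ ∂μ) + ∫⁻ x in D, ‖fderiv ℝ w x‖ₑ ∂μ) := by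
        simp_rw [fderiv_sub_const]
        gcongr
        exact setLIntegral_enorm_sub_weightedMean_le hD hDo.measurableSet hρ0 hρ1 hρ hw hwi
    _ = C * (P + 1) * ∫⁻ x in D, ‖fderiv ℝ w x‖ₑ ∂μ := by ring

end Haar

theorem trace_weighted_poincare_L1_general
    (D : Set (EuclideanSpace ℝ (Fin 2)))
    (hDo : IsOpen D) (hDb : Bornology.IsBounded D) (hDc : Convex ℝ D)
    (e : Set (EuclideanSpace ℝ (Fin 2)))
    (hseg : ∃ p q : EuclideanSpace ℝ (Fin 2), p ≠ q ∧ e = segment ℝ p q)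
    (heD : e ⊆ frontier D)
    (θ : ℝ) (hθ : θ ∈ Set.Ioc (0 : ℝ) 1)
    (ρ : EuclideanSpace ℝ (Fin 2) → ℝ)
    (hρ0 : ∀ x ∈ D, 0 ≤ ρ x) (hρ1 : ∀ x ∈ D, ρ x ≤ 1)
    (hρθ : θ * (volume D).toReal ≤ ∫ x in D, ρ x) :
    ∃ C > 0, ∀ w : EuclideanSpace ℝ (Fin 2) → ℝ, ContDiff ℝ 1 w →
      (∫ x in e,
          |w x - (∫ y in D, w y * ρ y) / ∫ y in D, ρ y| ∂(μH[1])) ≤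
        C * ∫ x in D, ‖fderiv ℝ w x‖ := by
  obtain ⟨p, q, hpq, rfl⟩ := hseg
  have hDne : D.Nonempty :=
    closure_nonempty_iff.1 ⟨p, frontier_subset_closure (heD (left_mem_segment ℝ p q))⟩
  have hρ : 0 < ∫ y in D, ρ y := (mul_pos hθ.1 (ENNReal.toReal_pos
    (hDo.measure_ne_zero volume hDne) hDb.measure_lt_top.ne)).trans_le hρθ
  obtain ⟨K, hK, hbound⟩ := exists_lintegral_segment_enorm_sub_weightedMean_le volume
    finrank_euclideanSpace_fin hDc hDo hDb hpq heD hρ0 hρ1 hρ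
  refine ⟨K.toReal + 1, by positivity, fun w hw => ?_⟩
  have hGi : IntegrableOn (fderiv ℝ w) D :=
    ((hw.continuous_fderiv one_ne_zero).continuousOn.integrableOn_compact
      hDb.isCompact_closure).mono_set subset_closure
  simp_rw [← Real.norm_eq_abs]
  calc ∫ x in segment ℝ p q, ‖w x - (∫ y in D, w y * ρ y) / ∫ y in D, ρ y‖ ∂μH[1]
      = (∫⁻ x in segment ℝ p q, ‖w x - (∫ y in D, w y * ρ y) / ∫ y in D, ρ y‖ₑ ∂μH[1]).toReal :=
        integral_norm_eq_lintegral_enorm (hw.continuous.sub continuous_const).aestronglyMeasurable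
    _ ≤ (K * ∫⁻ x in D, ‖fderiv ℝ w x‖ₑ).toReal :=
        ENNReal.toReal_mono (ENNReal.mul_ne_top hK hGi.2.ne) (hbound w hw)
    _ = K.toReal * ∫ x in D, ‖fderiv ℝ w x‖ := by
        rw [ENNReal.toReal_mul, integral_norm_eq_lintegral_enorm hGi.1]
    _ ≤ (K.toReal + 1) * ∫ x in D, ‖fderiv ℝ w x‖ := by
        gcongr
        linarith

/-- Trace-type approximation property (Lemma 5.4, second estimate): for a bounded
convex open set `D ⊆ ℝ²`, a nondegenerate closed segment `e ⊆ ∂D`, and a weight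
`0 ≤ ρ ≤ 1` on `D` with `∫_D ρ ≥ θ·|D|`, there is `C > 0` such that for every `C¹`
function `w`, `∫_e |w - e_ρ(w)| dH¹ ≤ C·∫_D |∇w|`, where
`e_ρ(w) = (∫_D w·ρ)/(∫_D ρ)`. -/
theorem trace_weighted_poincare_L1
    (D : Set (EuclideanSpace ℝ (Fin 2)))
    (hDo : IsOpen D) (hDb : Bornology.IsBounded D) (hDc : Convex ℝ D)
    (e : Set (EuclideanSpace ℝ (Fin 2)))
    (hseg : ∃ p q : EuclideanSpace ℝ (Fin 2), p ≠ q ∧ e = segment ℝ p q)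
    (heD : e ⊆ frontier D)
    (θ : ℝ) (hθ : θ ∈ Set.Ioc (0 : ℝ) 1)
    (ρ : EuclideanSpace ℝ (Fin 2) → ℝ) (hρm : Measurable ρ)
    (hρ0 : ∀ x ∈ D, 0 ≤ ρ x) (hρ1 : ∀ x ∈ D, ρ x ≤ 1)
    (hρθ : θ * (volume D).toReal ≤ ∫ x in D, ρ x) :
    ∃ C > 0, ∀ w : EuclideanSpace ℝ (Fin 2) → ℝ, ContDiff ℝ 1 w →
      (∫ x in e,
          |w x - (∫ y in D, w y * ρ y) / ∫ y in D, ρ y| ∂(μH[1])) ≤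
        C * ∫ x in D, ‖fderiv ℝ w x‖ :=
  trace_weighted_poincare_L1_general D hDo hDb hDc e hseg heD θ hθ ρ hρ0 hρ1 hρθ
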